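/- For every digraph H there exists a digraph F such that: (1) F can be obtained from H by a finite sequence of sink deletions; (2) α*(Γ(F)) ≥ α*(Γ(H)); and (3) the condensation F/∼ is a canonical DAG. -/

import Mathlib

noncomputable section

/-! ### Hypergraphs -/

/-- A hypergraph: a vertex set together with a set of nonempty hyperedges. -/
structure HGraph (V : Type) where
  verts : Set V
  edges : Set (Set V)
  edge_nonempty : ∀ e ∈ edges, e.Nonempty
  edge_subset : ∀ e ∈ edges, e ⊆ verts

namespace HGraph

variable {V : Type}

/-- An independent set: no two of its vertices lie in a common hyperedge. -/
def IsIndepSet (H : HGraph V) (I : Set V) : Prop :=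
  I ⊆ H.verts ∧ ∀ u ∈ I, ∀ v ∈ I, u ≠ v → ∀ e ∈ H.edges, ¬(u ∈ e ∧ v ∈ e)

/-- The independence number `α`. -/
def indepNum (H : HGraph V) : ℕ :=
  sSup {n | ∃ I : Set V, H.IsIndepSet I ∧ I.ncard = n}

/-- A fractional independent set: `μ : V(H) → [0,1]` with `∑_{v ∈ e} μ v ≤ 1` for each edge. -/
def IsFracIndep (H : HGraph V) (μ : V → ℝ) : Prop :=
  (∀ v, 0 ≤ μ v ∧ μ v ≤ 1) ∧ (∀ v, v ∉ H.verts → μ v = 0) ∧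
    ∀ e ∈ H.edges, (∑ᶠ v ∈ e, μ v) ≤ 1

/-- The weight of a (fractional independent) vertex-weighting. -/
def weight (H : HGraph V) (μ : V → ℝ) : ℝ := ∑ᶠ v ∈ H.verts, μ v

/-- The fractional independence number `α*`. -/
def fracIndepNum (H : HGraph V) : ℝ :=
  sSup {w | ∃ μ : V → ℝ, H.IsFracIndep μ ∧ H.weight μ = w}

/-- A fractional edge cover of a set `X` of vertices. -/
def IsFracEdgeCover (H : HGraph V) (X : Set V) (γ : Set V → ℝ) : Prop :=
  (∀ e, 0 ≤ γ e) ∧ (∀ e, e ∉ H.edges → γ e = 0) ∧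
    ∀ v ∈ X, 1 ≤ ∑ᶠ e ∈ {e ∈ H.edges | v ∈ e}, γ e

/-- The weight of an edge-weighting. -/
def coverWeight (H : HGraph V) (γ : Set V → ℝ) : ℝ := ∑ᶠ e ∈ H.edges, γ e

/-- `ρ*_H(X)`: the fractional edge cover number of a set `X` of vertices. -/
def fracCoverOf (H : HGraph V) (X : Set V) : ℝ :=
  sInf {w | ∃ γ : Set V → ℝ, H.IsFracEdgeCover X γ ∧ H.coverWeight γ = w}

/-- The fractional edge cover number `ρ*(H)`. -/
def fracEdgeCoverNum (H : HGraph V) : ℝ := H.fracCoverOf H.verts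

/-- A tree decomposition of a hypergraph. -/
structure TreeDecomp (H : HGraph V) where
  n : ℕ
  tree : SimpleGraph (Fin n)
  isTree : tree.IsTree
  bag : Fin n → Set V
  bag_subset : ∀ t, bag t ⊆ H.verts
  verts_covered : ∀ v ∈ H.verts, ∃ t, v ∈ bag t
  edges_covered : ∀ e ∈ H.edges, ∃ t, e ⊆ bag t
  bags_connected : ∀ (v : V) (t₁ t₂ : Fin n) (h₁ : v ∈ bag t₁) (h₂ : v ∈ bag t₂),
    (tree.induce {t | v ∈ bag t}).Reachable ⟨t₁, h₁⟩ ⟨t₂, h₂⟩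

/-- The `μ`-width of a tree decomposition: the maximum `μ`-weight of a bag. -/
def TreeDecomp.muWidth {H : HGraph V} (td : H.TreeDecomp) (μ : V → ℝ) : ℝ :=
  ⨆ t, ∑ᶠ v ∈ td.bag t, μ v

/-- The `μ`-width of a hypergraph: minimum `μ`-width over tree decompositions. -/
def muWidth (H : HGraph V) (μ : V → ℝ) : ℝ :=
  sInf {w | ∃ td : H.TreeDecomp, td.muWidth μ = w}

/-- The adaptive width `aw(H)`: supremum of the `μ`-widths over fractional
independent sets `μ`. -/
def adaptiveWidth (H : HGraph V) : ℝ :=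
  sSup {w | ∃ μ : V → ℝ, H.IsFracIndep μ ∧ H.muWidth μ = w}

/-- The fractional hypertreewidth `fhtw(H)`. -/
def fhtw (H : HGraph V) : ℝ :=
  sInf {w | ∃ td : H.TreeDecomp, (⨆ t, H.fracCoverOf (td.bag t)) = w}

/-- Add a new vertex `v'` to the hypergraph and replace the hyperedge `e` by `e ∪ {v'}`. -/
def extendEdge (H : HGraph V) (e : Set V) (he : e ∈ H.edges) (v' : V) :
    HGraph V where
  verts := insert v' H.verts
  edges := (H.edges \ {e}) ∪ {insert v' e}
  edge_nonempty := by
    rintro f (⟨hf, -⟩ | hf)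
    · exact H.edge_nonempty f hf
    · rw [Set.mem_singleton_iff] at hf; subst hf; exact ⟨v', Set.mem_insert _ _⟩
  edge_subset := by
    rintro f (⟨hf, -⟩ | hf)
    · exact (H.edge_subset f hf).trans (Set.subset_insert _ _)
    · rw [Set.mem_singleton_iff] at hf; subst hf
      exact Set.insert_subset_insert (H.edge_subset e he)

end HGraph

/-! ### Digraphs -/

namespace Digraph

variable {V A B : Type}

/-- `u` reaches `v` by a directed path (possibly of length 0). -/
def Reaches (G : Digraph V) (u v : V) : Prop := Relation.ReflTransGen G.Adj u v

/-- `R(u)`: the set of vertices reachable from `u` (including `u`). -/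
def reachSet (G : Digraph V) (u : V) : Set V := {v | G.Reaches u v}

/-- The setoid whose classes are the strongly connected components. -/
def sccSetoid (G : Digraph V) : Setoid V where
  r u v := G.Reaches u v ∧ G.Reaches v u
  iseqv := ⟨fun _ => ⟨.refl, .refl⟩, fun h => ⟨h.2, h.1⟩,
    fun h₁ h₂ => ⟨h₁.1.trans h₂.1, h₂.2.trans h₁.2⟩⟩

/-- The condensation `H/∼`: the loop-free DAG obtained by contracting each strongly
connected component to a single vertex. -/
def cond (G : Digraph V) : Digraph (Quotient G.sccSetoid) where
  Adj X Y := X ≠ Y ∧ ∃ a b, Quotient.mk G.sccSetoid a = X ∧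
    Quotient.mk G.sccSetoid b = Y ∧ G.Adj a b

/-- `v` lies in a source component: its strongly connected component is not
reachable from any other component. -/
def InSourceComp (G : Digraph V) (v : V) : Prop := ∀ u, G.Reaches u v → G.Reaches v u

/-- `v` is a source: a vertex of in-degree `0`. -/
def IsSrc (G : Digraph V) (v : V) : Prop := ∀ u, ¬ G.Adj u v

/-- The reachability hypergraph `R(H)` of a digraph: vertices `V(H)`, one hyperedge
`R(s)` for each (representative `s` of a) source component. -/
def reachHyp (G : Digraph V) : HGraph V where
  verts := Set.univ
  edges := {e | ∃ s, G.InSourceComp s ∧ e = G.reachSet s}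
  edge_nonempty := by rintro e ⟨s, -, rfl⟩; exact ⟨s, Relation.ReflTransGen.refl⟩
  edge_subset := fun e _ => Set.subset_univ e

/-- The contour `Γ(H)` of a digraph: the reachability hypergraph with all vertices of
source components deleted (empty hyperedges discarded). -/
def contour (G : Digraph V) : HGraph V where
  verts := {v | ¬ G.InSourceComp v}
  edges := {e | (∃ s, G.InSourceComp s ∧
    e = G.reachSet s \ {v | G.InSourceComp v}) ∧ e.Nonempty}
  edge_nonempty := fun _ he => he.2
  edge_subset := by rintro e ⟨⟨s, -, rfl⟩, -⟩ v hv; exact hv.2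

/-- The reachability hypergraph of a DAG: one hyperedge `R(s)` for each in-degree `0`
vertex `s`. -/
def dagReachHyp (G : Digraph V) : HGraph V where
  verts := Set.univ
  edges := {e | ∃ s, G.IsSrc s ∧ e = G.reachSet s}
  edge_nonempty := by rintro e ⟨s, -, rfl⟩; exact ⟨s, Relation.ReflTransGen.refl⟩
  edge_subset := fun e _ => Set.subset_univ e

/-- The contour of a DAG: the reachability hypergraph with all sources deleted. -/
def dagContour (G : Digraph V) : HGraph V where
  verts := {v | ¬ G.IsSrc v}
  edges := {e | (∃ s, G.IsSrc s ∧ e = G.reachSet s \ {v | G.IsSrc v}) ∧ e.Nonempty}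
  edge_nonempty := fun _ he => he.2
  edge_subset := by rintro e ⟨⟨s, -, rfl⟩, -⟩ v hv; exact hv.2

/-- A homomorphism of digraphs: a map preserving arcs. -/
def IsHom (H : Digraph A) (G : Digraph B) (φ : A → B) : Prop :=
  ∀ ⦃u v⦄, H.Adj u v → G.Adj (φ u) (φ v)

/-- The tensor product of digraphs. -/
def tensor (G : Digraph A) (F : Digraph B) : Digraph (A × B) where
  Adj x y := G.Adj x.1 y.1 ∧ F.Adj x.2 y.2

/-- The induced subdigraph on a set of vertices. -/
def induce (G : Digraph A) (S : Set A) : Digraph S where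
  Adj a b := G.Adj a.1 b.1

/-- The quotient digraph `H/σ` of a digraph by a partition (setoid) of its vertices. -/
def quot (H : Digraph A) (σ : Setoid A) : Digraph (Quotient σ) where
  Adj X Y := ∃ a b, Quotient.mk σ a = X ∧ Quotient.mk σ b = Y ∧ H.Adj a b

/-- A loop-free digraph. -/
def LoopFree (H : Digraph A) : Prop := ∀ v, ¬ H.Adj v v

/-- A digraph without directed cycles (in particular, without loops). -/
def IsAcyclic (H : Digraph A) : Prop := ∀ u v, H.Adj u v → ¬ H.Reaches v u

/-- A canonical DAG: a DAG in which every vertex has in-degree 0 or out-degree 0. -/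
def IsCanonicalDAG (H : Digraph A) : Prop :=
  H.IsAcyclic ∧ ∀ v, (∀ u, ¬ H.Adj u v) ∨ (∀ u, ¬ H.Adj v u)

/-- `t` lies in a sink component: from its strongly connected component no other
component is reachable. -/
def IsSinkVert (H : Digraph A) (t : A) : Prop := ∀ v, H.Reaches t v → H.Reaches v t

/-- Sink deletion: delete all vertices of the strongly connected component of `t`. -/
def sinkDelete (H : Digraph A) (t : A) :
    Digraph {v : A // ¬ (H.Reaches v t ∧ H.Reaches t v)} where
  Adj a b := H.Adj a.1 b.1

/-- Loop deletion: delete the loop at `u`. -/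
def deleteLoop (H : Digraph A) (u : A) : Digraph A where
  Adj a b := H.Adj a b ∧ ¬(a = u ∧ b = u)

/-- The number of sources (in-degree `0` vertices) of the condensation `H/∼`. -/
def numSources (H : Digraph A) : ℕ :=
  {X : Quotient H.sccSetoid | ∀ Y, ¬ H.cond.Adj Y X}.ncard

end Digraph

/-- The number of homomorphisms from `H` to `G`. -/
def homCount {A B : Type} (H : Digraph A) (G : Digraph B) : ℕ :=
  Nat.card {φ : A → B // H.IsHom G φ}

/-- Two digraphs are isomorphic: a bijection of the vertex sets preserving arcs in
both directions. -/
def DigraphIso {A B : Type} (H : Digraph A) (G : Digraph B) : Prop :=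
  ∃ e : A ≃ B, ∀ u v, H.Adj u v ↔ G.Adj (e u) (e v)

/-- The number of subgraphs of `G` (pairs of a vertex subset and an arc subset of `G`
among those vertices) that are isomorphic to `H`. -/
def subCount {A B : Type} (H : Digraph A) (G : Digraph B) : ℕ :=
  Nat.card {p : Set B × (B → B → Prop) //
    (∀ a b, p.2 a b → a ∈ p.1 ∧ b ∈ p.1 ∧ G.Adj a b) ∧
    DigraphIso H (Digraph.mk fun (a b : p.1) => p.2 a b)}

/-- The number of vertex subsets of `G` inducing a subgraph isomorphic to `H`. -/
def indSubCount {A B : Type} (H : Digraph A) (G : Digraph B) : ℕ :=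
  Nat.card {S : Set B // DigraphIso H (G.induce S)}

/-- `H'` is an arc supergraph of the loop-free digraph `H`: a loop-free digraph on the
same vertex set whose arc set contains that of `H`. -/
def ArcSupergraph {A : Type} (H H' : Digraph A) : Prop :=
  H'.LoopFree ∧ ∀ u v, H.Adj u v → H'.Adj u v

/-- The setoid identifying exactly `u` and `v`. -/
def pairSetoid {A : Type} (u v : A) : Setoid A where
  r a b := a = b ∨ (a ∈ ({u, v} : Set A) ∧ b ∈ ({u, v} : Set A))
  iseqv := by
    refine ⟨fun _ => Or.inl rfl, ?_, ?_⟩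
    · rintro a b (rfl | ⟨h₁, h₂⟩)
      · exact Or.inl rfl
      · exact Or.inr ⟨h₂, h₁⟩
    · rintro a b c (rfl | ⟨h₁, h₂⟩) h
      · exact h
      · rcases h with rfl | ⟨h₃, h₄⟩
        · exact Or.inr ⟨h₁, h₂⟩
        · exact Or.inr ⟨h₁, h₄⟩

/-- Arc contraction: identify the endpoints of the arc `(u,v)`; arcs between `u` and
`v` do not yield a loop. -/
def Digraph.contractArc {A : Type} (H : Digraph A) (u v : A) :
    Digraph (Quotient (pairSetoid u v)) where
  Adj X Y := ∃ a b, Quotient.mk (pairSetoid u v) a = X ∧ Quotient.mk (pairSetoid u v) b = Y ∧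
    H.Adj a b ∧ ¬(a ≠ b ∧ a ∈ ({u, v} : Set A) ∧ b ∈ ({u, v} : Set A))

/-- `MRMinor M H`: `M` is a monotone reversible minor of `H`, i.e. `M` can be
obtained (up to isomorphism) from `H` by a finite sequence of sink deletions,
arc contractions, and loop deletions. -/
inductive MRMinor : ∀ {A : Type}, Digraph A → ∀ {B : Type}, Digraph B → Prop
  | of_iso {A B : Type} {M : Digraph A} {H : Digraph B} :
      DigraphIso M H → MRMinor M H
  | sink_del {A B : Type} {M : Digraph A} {H : Digraph B} (t : B) :
      H.IsSinkVert t → MRMinor M (H.sinkDelete t) → MRMinor M H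
  | contract {A B : Type} {M : Digraph A} {H : Digraph B} (u v : B) :
      H.Adj u v → MRMinor M (H.contractArc u v) → MRMinor M H
  | loop_del {A B : Type} {M : Digraph A} {H : Digraph B} (u : B) :
      H.Adj u u → MRMinor M (H.deleteLoop u) → MRMinor M H

/-- `SinkDelSeq H F`: `F` is obtained from `H` by a finite sequence of sink deletions. -/
inductive SinkDelSeq : ∀ {A : Type}, Digraph A → ∀ {B : Type}, Digraph B → Prop
  | refl {A : Type} (H : Digraph A) : SinkDelSeq H H
  | step {A : Type} {H : Digraph A} (t : A) {B : Type} {F : Digraph B} :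
      H.IsSinkVert t → SinkDelSeq (H.sinkDelete t) F → SinkDelSeq H F

/-- The directed split of an undirected graph `F`: vertices `V(F) ⊕ E(F)`, with arcs
from each edge `e = {u,v}` to `u` and to `v`. -/
def dsplit {α : Type} (F : SimpleGraph α) : Digraph (α ⊕ F.edgeSet) where
  Adj x y :=
    match x, y with
    | Sum.inr e, Sum.inl u => u ∈ e.1
    | _, _ => False

/-- `D` has an induced matching gadget of size `k`: arcs `(s i, w i)` with the `w i`
pairwise distinct such that no source of `D` reaches two distinct `w i`. -/
def HasIMG {A : Type} (D : Digraph A) (k : ℕ) : Prop :=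
  ∃ s w : Fin k → A, (∀ i, D.Adj (s i) (w i)) ∧ Function.Injective w ∧
    ∀ x, D.IsSrc x → ∀ i j, D.Reaches x (w i) → D.Reaches x (w j) → i = j

/-- The maximum size of an induced matching gadget of `D`. -/
def imgNum {A : Type} (D : Digraph A) : ℕ := sSup {k | HasIMG D k}

/-- A fractional cover of a DAG `D`: nonnegative weights on the sources such that each
non-source is covered with total weight at least 1; the total weight is at least 1. -/
def Digraph.IsFracCover {A : Type} (D : Digraph A) (ψ : A → ℝ) : Prop :=
  (∀ s, 0 ≤ ψ s) ∧ (∀ s, ¬ D.IsSrc s → ψ s = 0) ∧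
    (∀ v, ¬ D.IsSrc v → 1 ≤ ∑ᶠ s ∈ {s | D.IsSrc s ∧ v ∈ D.reachSet s}, ψ s) ∧
    1 ≤ ∑ᶠ s ∈ {s | D.IsSrc s}, ψ s

/-- The fractional cover number of a DAG: the minimum weight of a fractional cover. -/
def Digraph.dagFracCoverNum {A : Type} (D : Digraph A) : ℝ :=
  sInf {w | ∃ ψ : A → ℝ, D.IsFracCover ψ ∧ (∑ᶠ s ∈ {s | D.IsSrc s}, ψ s) = w}

/-- The fractional cover number `ρ*(H)` of a digraph: the fractional cover number of
its condensation. -/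
def Digraph.fracCoverNum {A : Type} (G : Digraph A) : ℝ := G.cond.dagFracCoverNum

/-!
If some vertex `m` lies neither in a source nor in a sink component, it reaches a sink
component `T` that does not reach back to `m`. Deleting `T` does not decrease `α*` of the
contour: every hyperedge of `Γ(H)` containing `m` also contains `T`, so moving the whole
`μ`-weight of `T` onto `m` turns a fractional independent set of `Γ(H)` into one of the
contour of `H - T` of the same weight. Once every vertex lies in a source or a sink
component, every vertex of the condensation is a source or a sink.
-/

open Set Function

lemma finsum_mem_preimage_coe {V : Type} (g : V → ℝ) (s X : Set V) :
    ∑ᶠ a ∈ ((↑) ⁻¹' X : Set s), g a = ∑ᶠ v ∈ s ∩ X, g v := by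
  rw [← Subtype.image_preimage_coe, finsum_mem_image Subtype.val_injective.injOn]

section Finsum

variable {V : Type} [Finite V]

lemma finsum_mem_le_finsum_mem_of_subset {f : V → ℝ} (hf : ∀ v, 0 ≤ f v) {s t : Set V}
    (hst : s ⊆ t) : ∑ᶠ v ∈ s, f v ≤ ∑ᶠ v ∈ t, f v := by
  rw [← finsum_mem_add_sdiff hst t.toFinite]
  exact le_add_of_nonneg_right (finsum_nonneg fun v => finsum_nonneg fun _ => hf v)

section DecidableEq

variable [DecidableEq V]

lemma finsum_mem_update_add (f : V → ℝ) (c : ℝ) {s : Set V} {m : V} (hm : m ∈ s) :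
    ∑ᶠ v ∈ s, update f m (f m + c) v = ∑ᶠ v ∈ s, f v + c := by
  rw [← insert_eq_of_mem hm, ← insert_sdiff_singleton,
    finsum_mem_insert _ (fun h => h.2 rfl) (toFinite _),
    finsum_mem_insert _ (fun h => h.2 rfl) (toFinite _), update_self,
    finsum_mem_congr rfl fun v (hv : v ∈ s \ {m}) => update_of_ne hv.2 (f m + c) f]
  ring

lemma finsum_mem_sdiff_update_eq (μ : V → ℝ) {T X : Set V} {m : V} (hmT : m ∉ T)
    (hmX : m ∈ X) (hTX : T ⊆ X) :
    ∑ᶠ v ∈ X \ T, update μ m (μ m + ∑ᶠ u ∈ T, μ u) v = ∑ᶠ v ∈ X, μ v := by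
  rw [finsum_mem_update_add _ _ (show m ∈ X \ T from ⟨hmX, hmT⟩), add_comm,
    finsum_mem_add_sdiff hTX X.toFinite]

lemma finsum_mem_sdiff_update_le {μ : V → ℝ} (hμ : ∀ v, 0 ≤ μ v) {T X : Set V} {m : V}
    (hmT : m ∉ T) (hX : m ∈ X → T ⊆ X) :
    ∑ᶠ v ∈ X \ T, update μ m (μ m + ∑ᶠ u ∈ T, μ u) v ≤ ∑ᶠ v ∈ X, μ v := by
  by_cases hmX : m ∈ X
  · exact (finsum_mem_sdiff_update_eq μ hmT hmX (hX hmX)).le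
  · rw [finsum_mem_congr rfl fun v (hv : v ∈ X \ T) =>
      update_of_ne (ne_of_mem_of_not_mem hv.1 hmX) _ μ]
    exact finsum_mem_le_finsum_mem_of_subset hμ sdiff_subset

end DecidableEq

end Finsum

namespace HGraph

variable {V W : Type}

lemma isFracIndep_zero (Γ : HGraph V) : Γ.IsFracIndep 0 :=
  ⟨fun _ => ⟨le_rfl, zero_le_one⟩, fun _ _ => rfl, fun _ _ => by simp⟩

lemma weight_le_natCard [Finite V] {Γ : HGraph V} {μ : V → ℝ} (hμ : Γ.IsFracIndep μ) :
    Γ.weight μ ≤ Nat.card V := by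
  have : Fintype V := Fintype.ofFinite V
  calc Γ.weight μ ≤ ∑ᶠ v ∈ univ, μ v :=
        finsum_mem_le_finsum_mem_of_subset (fun v => (hμ.1 v).1) (subset_univ _)
    _ ≤ ∑ _v : V, (1 : ℝ) := by
        rw [finsum_mem_univ, finsum_eq_sum_of_fintype]
        exact Finset.sum_le_sum fun v _ => (hμ.1 v).2
    _ = Nat.card V := by simp

lemma fracIndepNum_le_of_forall_exists [Finite W] {Γ : HGraph V} {Γ' : HGraph W}
    (h : ∀ μ, Γ.IsFracIndep μ → ∃ ν, Γ'.IsFracIndep ν ∧ Γ.weight μ ≤ Γ'.weight ν) :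
    Γ.fracIndepNum ≤ Γ'.fracIndepNum := by
  refine csSup_le ⟨_, 0, Γ.isFracIndep_zero, rfl⟩ ?_
  rintro _ ⟨μ, hμ, rfl⟩
  obtain ⟨ν, hν, hle⟩ := h μ hμ
  exact hle.trans <| le_csSup ⟨Nat.card W, by rintro _ ⟨ν, hν, rfl⟩; exact weight_le_natCard hν⟩
    ⟨ν, hν, rfl⟩

theorem fracIndepNum_le_of_absorb [Finite V] {Γ : HGraph V} {T : Set V} {m : V}
    {Γ' : HGraph ↥Tᶜ} (hmT : m ∉ T) (hm : ∃ e ∈ Γ.edges, m ∈ e) (hT : ∀ e ∈ Γ.edges, m ∈ e → T ⊆ e)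
    (hverts : Γ'.verts = (↑) ⁻¹' Γ.verts)
    (hedges : ∀ e' ∈ Γ'.edges, ∃ e ∈ Γ.edges, e' = (↑) ⁻¹' e) :
    Γ.fracIndepNum ≤ Γ'.fracIndepNum := by
  classical
  obtain ⟨e₀, he₀, hme₀⟩ := hm
  refine fracIndepNum_le_of_forall_exists fun μ ⟨hμ01, hμ0, hμe⟩ => ?_
  have hμ : ∀ v, 0 ≤ μ v := fun v => (hμ01 v).1
  set ν := update μ m (μ m + ∑ᶠ u ∈ T, μ u) with hν
  have hsum : ∀ X : Set V, ∑ᶠ a ∈ ((↑) ⁻¹' X : Set ↥Tᶜ), ν a = ∑ᶠ v ∈ X \ T, ν v :=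
    fun X => by rw [finsum_mem_preimage_coe, sdiff_eq_compl_inter]
  have hνm : ν m = ∑ᶠ u ∈ insert m T, μ u := by
    rw [hν, update_self, finsum_mem_insert _ hmT T.toFinite]
  have hν01 : ∀ v, 0 ≤ ν v ∧ ν v ≤ 1 := by
    intro v
    rcases eq_or_ne v m with rfl | hvm
    · rw [hνm]
      exact ⟨finsum_nonneg fun u => finsum_nonneg fun _ => hμ u,
        (finsum_mem_le_finsum_mem_of_subset hμ (insert_subset hme₀ (hT e₀ he₀ hme₀))).trans
          (hμe e₀ he₀)⟩
    · rw [hν, update_of_ne hvm]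
      exact hμ01 v
  refine ⟨fun a => ν a, ⟨fun a => hν01 a, fun a ha => ?_, fun e' he' => ?_⟩, ?_⟩
  · rw [hverts] at ha
    change ν a = 0
    rw [hν, update_of_ne (ne_of_mem_of_not_mem (Γ.edge_subset e₀ he₀ hme₀) ha).symm]
    exact hμ0 a ha
  · obtain ⟨e, he, rfl⟩ := hedges e' he'
    rw [hsum]
    exact (finsum_mem_sdiff_update_le hμ hmT (hT e he)).trans (hμe e he)
  · rw [weight, weight, hverts, hsum]
    exact (finsum_mem_sdiff_update_eq μ hmT (Γ.edge_subset e₀ he₀ hme₀)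
      ((hT e₀ he₀ hme₀).trans (Γ.edge_subset e₀ he₀))).ge

end HGraph

namespace Digraph

variable {V : Type}

section Finite

variable [Finite V]

lemma exists_reaches_isSinkVert (H : Digraph V) (v : V) :
    ∃ t, H.Reaches v t ∧ H.IsSinkVert t := by
  let r : V → V → Prop := fun a b => H.Reaches b a ∧ ¬ H.Reaches a b
  have : IsTrans V r := ⟨fun a b c hab hbc => ⟨hbc.1.trans hab.1, fun h => hab.2 (h.trans hbc.1)⟩⟩
  have : Std.Irrefl r := ⟨fun a ha => ha.2 ha.1⟩
  obtain ⟨t, hvt, hmin⟩ := (Finite.wellFounded_of_trans_of_irrefl r).has_min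
    (H.reachSet v) ⟨v, .refl⟩
  exact ⟨t, hvt, fun w htw => by_contra fun hwt => hmin w (hvt.trans htw) ⟨htw, hwt⟩⟩

lemma exists_inSourceComp_reaches (H : Digraph V) (v : V) :
    ∃ s, H.InSourceComp s ∧ H.Reaches s v := by
  let r : V → V → Prop := fun a b => H.Reaches a b ∧ ¬ H.Reaches b a
  have : IsTrans V r := ⟨fun a b c hab hbc => ⟨hab.1.trans hbc.1, fun h => hab.2 (hbc.1.trans h)⟩⟩
  have : Std.Irrefl r := ⟨fun a ha => ha.2 ha.1⟩
  obtain ⟨s, hsv, hmin⟩ := (Finite.wellFounded_of_trans_of_irrefl r).has_min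
    {u | H.Reaches u v} ⟨v, .refl⟩
  exact ⟨s, fun u hus => by_contra fun hsu => hmin u (hus.trans hsv) ⟨hus, hsu⟩, hsv⟩

end Finite

lemma Reaches.of_cond {H : Digraph V} {a b : V}
    (h : H.cond.Reaches ⟦a⟧ ⟦b⟧) : H.Reaches a b := by
  suffices ∀ Y, H.cond.Reaches ⟦a⟧ Y → ∀ b, ⟦b⟧ = Y → H.Reaches a b from this _ h b rfl
  intro Y hY
  induction hY with
  | refl => exact fun b hb => (Quotient.exact hb).2
  | tail _ hYZ ih =>
    rintro b rfl
    obtain ⟨-, c, d, hc, hd, hcd⟩ := hYZ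
    exact ((ih c hc).tail hcd).trans (Quotient.exact hd).1

lemma cond_isAcyclic (H : Digraph V) : H.cond.IsAcyclic := by
  rintro X Y ⟨hne, a, b, rfl, rfl, hab⟩ hba
  exact hne (Quotient.sound ⟨.single hab, hba.of_cond⟩)

lemma cond_isCanonicalDAG (H : Digraph V) (h : ∀ v, H.InSourceComp v ∨ H.IsSinkVert v) :
    H.cond.IsCanonicalDAG := by
  refine ⟨cond_isAcyclic H, Quotient.ind fun v => ?_⟩
  rcases h v with hv | hv
  · refine .inl ?_
    rintro _ ⟨hne, a, b, rfl, hb, hab⟩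
    have hbv : H.Reaches b v := (Quotient.exact hb).1
    have hav : H.Reaches a v := (Relation.ReflTransGen.single hab).trans hbv
    exact hne (Quotient.sound ⟨hav, hv a hav⟩)
  · refine .inr ?_
    rintro _ ⟨hne, a, b, ha, rfl, hab⟩
    have hvb : H.Reaches v b := (Quotient.exact ha).2.tail hab
    exact hne (Quotient.sound ⟨hvb, hv b hvb⟩)

section SinkDelete

variable {H : Digraph V} {t : V}

lemma not_sccRel_of_reaches (ht : H.IsSinkVert t) {u v : V} (huv : H.Reaches u v)
    (hv : ¬ (H.Reaches v t ∧ H.Reaches t v)) : ¬ (H.Reaches u t ∧ H.Reaches t u) :=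
  fun ⟨_, htu⟩ => hv ⟨ht v (htu.trans huv), htu.trans huv⟩

lemma sinkDelete_reaches_iff (ht : H.IsSinkVert t)
    {a b : {v // ¬ (H.Reaches v t ∧ H.Reaches t v)}} :
    (H.sinkDelete t).Reaches a b ↔ H.Reaches a b := by
  refine ⟨fun hab => Relation.ReflTransGen.lift Subtype.val (fun _ _ h => h) _ _ hab,
    fun hab => ?_⟩
  suffices ∀ x (hx : ¬ (H.Reaches x t ∧ H.Reaches t x)), H.Reaches x b →
      (H.sinkDelete t).Reaches ⟨x, hx⟩ b from this a a.2 hab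
  intro x hx hxb
  induction hxb using Relation.ReflTransGen.head_induction_on with
  | refl => exact .refl
  | head hxc hcb ih =>
    exact .head (show H.Adj _ _ from hxc) (ih (not_sccRel_of_reaches ht hcb b.2))

lemma sinkDelete_inSourceComp_iff (ht : H.IsSinkVert t)
    (a : {v // ¬ (H.Reaches v t ∧ H.Reaches t v)}) :
    (H.sinkDelete t).InSourceComp a ↔ H.InSourceComp a := by
  refine ⟨fun h u hua => ?_, fun h u hua => ?_⟩
  · have hu := not_sccRel_of_reaches ht hua a.2
    exact (sinkDelete_reaches_iff ht (b := ⟨u, hu⟩)).1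
      (h ⟨u, hu⟩ ((sinkDelete_reaches_iff ht).2 hua))
  · exact (sinkDelete_reaches_iff ht).2 (h u ((sinkDelete_reaches_iff ht).1 hua))

lemma contour_sinkDelete_verts (ht : H.IsSinkVert t) :
    (H.sinkDelete t).contour.verts = (↑) ⁻¹' H.contour.verts :=
  ext fun a => (sinkDelete_inSourceComp_iff ht a).not

lemma exists_contour_edges_eq_preimage (ht : H.IsSinkVert t) {e' : Set _}
    (he' : e' ∈ (H.sinkDelete t).contour.edges) :
    ∃ e ∈ H.contour.edges, e' = (↑) ⁻¹' e := by
  obtain ⟨⟨s, hs, rfl⟩, a, ha⟩ := he'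
  have hreach : ∀ b, b ∈ (H.sinkDelete t).reachSet s ↔ (b : V) ∈ H.reachSet s :=
    fun b => sinkDelete_reaches_iff ht
  have hsrc : ∀ b, b ∈ {v | (H.sinkDelete t).InSourceComp v} ↔
      (b : V) ∈ {v | H.InSourceComp v} :=
    sinkDelete_inSourceComp_iff ht
  refine ⟨H.reachSet s \ {v | H.InSourceComp v},
    ⟨⟨s, (sinkDelete_inSourceComp_iff ht s).1 hs, rfl⟩, a, ?_⟩, ?_⟩
  · exact ⟨(hreach a).1 ha.1, (hsrc a).not.1 ha.2⟩
  · ext b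
    exact and_congr (hreach b) (hsrc b).not

variable [Finite V]

theorem fracIndepNum_contour_le_sinkDelete {t m : V} (ht : H.IsSinkVert t)
    (hmt : H.Reaches m t) (htm : ¬ H.Reaches t m) (hm : ¬ H.InSourceComp m) :
    H.contour.fracIndepNum ≤ (H.sinkDelete t).contour.fracIndepNum := by
  refine HGraph.fracIndepNum_le_of_absorb (T := {v | H.Reaches v t ∧ H.Reaches t v}) (m := m)
    (fun h => htm h.2) ?_ ?_ (contour_sinkDelete_verts ht)
    (fun _ => exists_contour_edges_eq_preimage ht)
  · obtain ⟨s, hs, hsm⟩ := H.exists_inSourceComp_reaches m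
    exact ⟨_, ⟨⟨s, hs, rfl⟩, m, hsm, hm⟩, hsm, hm⟩
  · rintro _ ⟨⟨s, -, rfl⟩, -⟩ ⟨hsm, -⟩ u ⟨-, htu⟩
    have hmu : H.Reaches m u := hmt.trans htu
    exact ⟨hsm.trans hmu, fun hu => htm (htu.trans (hu m hmu))⟩

theorem exists_isSinkVert_fracIndepNum_contour_le_sinkDelete
    (hH : ¬ ∀ v, H.InSourceComp v ∨ H.IsSinkVert v) :
    ∃ t, H.IsSinkVert t ∧ H.contour.fracIndepNum ≤ (H.sinkDelete t).contour.fracIndepNum := by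
  simp only [not_forall, not_or, IsSinkVert, exists_prop] at hH
  obtain ⟨m, hm, w, hmw, hwm⟩ := hH
  obtain ⟨t, hwt, ht⟩ := H.exists_reaches_isSinkVert w
  exact ⟨t, ht, fracIndepNum_contour_le_sinkDelete ht (hmw.trans hwt)
    (fun htm => hwm (hwt.trans htm)) hm⟩

end SinkDelete

end Digraph

theorem stmt17 {V : Type} [Fintype V] (H : Digraph V) :
    ∃ (B : Type) (F : Digraph B), SinkDelSeq H F ∧
      H.contour.fracIndepNum ≤ F.contour.fracIndepNum ∧
      F.cond.IsCanonicalDAG := by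
  classical
  induction h : Fintype.card V using Nat.strong_induction_on generalizing V with
  | _ n ih =>
  by_cases hH : ∀ v, H.InSourceComp v ∨ H.IsSinkVert v
  · exact ⟨V, H, .refl H, le_rfl, H.cond_isCanonicalDAG hH⟩
  obtain ⟨t, ht, hle⟩ := H.exists_isSinkVert_fracIndepNum_contour_le_sinkDelete hH
  have hcard := Fintype.card_subtype_lt (p := fun v => ¬ (H.Reaches v t ∧ H.Reaches t v))
    (x := t) (not_not.2 ⟨.refl, .refl⟩)
  obtain ⟨B, F, hF, hleF, hcan⟩ := ih _ (h ▸ hcard) (H.sinkDelete t) rfl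
  exact ⟨B, F, .step t ht hF, hle.trans hleF, hcan⟩
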